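/- Krom-Horn programs distribute from the left over union: for any Krom-Horn program K and answer set programs P, R over A, K ∘ (P ∪ R) = (K ∘ P) ∪ (K ∘ R). -/
import Mathlib


open Classical Finset

/-- A rule of an answer set program: a head atom, a set of positive body atoms,
and a set of negated body atoms. -/
structure Rule (α : Type*) where
  head : α
  pos : Finset α
  neg : Finset α
deriving DecidableEq

instance {α : Type*} [DecidableEq α] [Fintype α] : Fintype (Rule α) :=
  Fintype.ofEquiv (α × Finset α × Finset α)
    { toFun := fun x => ⟨x.1, x.2.1, x.2.2⟩
      invFun := fun r => (r.head, r.pos, r.neg)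
      left_inv := fun _ => rfl
      right_inv := fun _ => rfl }

variable {α : Type*} [Fintype α] [DecidableEq α]

/-- Program-level negation (the tf/∨/De Morgan construction):
for each head atom `a`, either no rule of `R` has head `a` (then the fact `a` is produced),
or one negated literal is chosen from the body of each rule of `R` with head `a`
(De Morgan + distributivity); heads of facts of `R` are dropped (their body `{t}` negates to `f`). -/
noncomputable def notProg {α : Type*} [Fintype α] [DecidableEq α]
    (R : Finset (Rule α)) : Finset (Rule α) :=
  Finset.univ.filter (fun t =>
    ((∀ s ∈ R, s.head ≠ t.head) ∧ t.pos = ∅ ∧ t.neg = ∅) ∨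
    ((∃ s ∈ R, s.head = t.head) ∧
      ∃ c : Rule α → α ⊕ α,
        (∀ s ∈ R, s.head = t.head →
          Sum.elim (fun b => b ∈ s.pos) (fun b => b ∈ s.neg) (c s)) ∧
        t.pos.image Sum.inl ∪ t.neg.image Sum.inr =
          (R.filter (fun s => s.head = t.head)).image (fun s => Sum.swap (c s))))

/-- Sequential composition of answer set programs. -/
noncomputable def comp {α : Type*} [Fintype α] [DecidableEq α]
    (P R : Finset (Rule α)) : Finset (Rule α) :=
  Finset.univ.filter (fun t => ∃ r ∈ P, ∃ S N : Finset (Rule α),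
    S ⊆ R ∧ N ⊆ notProg R ∧
    S.card = r.pos.card ∧ N.card = r.neg.card ∧
    S.image Rule.head = r.pos ∧ N.image Rule.head = r.neg ∧
    t.head = r.head ∧
    t.pos = (S ∪ N).sup Rule.pos ∧
    t.neg = (S ∪ N).sup Rule.neg)

/-- The unit program `1_A = {a ← a : a ∈ A}`. -/
def unitP (α : Type*) [Fintype α] [DecidableEq α] : Finset (Rule α) :=
  Finset.univ.image (fun a => (⟨a, {a}, ∅⟩ : Rule α))

/-- An interpretation viewed as a fact program. -/
def interp {α : Type*} [Fintype α] [DecidableEq α] (I : Finset α) : Finset (Rule α) :=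
  I.image (fun a => (⟨a, ∅, ∅⟩ : Rule α))

/-- The facts (rules with empty body) of a program. -/
noncomputable def factsOf {α : Type*} [Fintype α] [DecidableEq α]
    (P : Finset (Rule α)) : Finset (Rule α) :=
  P.filter (fun r => r.pos = ∅ ∧ r.neg = ∅)

/-- The van Emden–Kowalski immediate consequence operator. -/
noncomputable def TP {α : Type*} [Fintype α] [DecidableEq α]
    (P : Finset (Rule α)) (I : Finset α) : Finset α :=
  (P.filter (fun r => r.pos ⊆ I ∧ Disjoint r.neg I)).image Rule.head

/-- A Krom-Horn program: all rules are Horn with at most one body atom. -/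
def isKromHorn {α : Type*} [Fintype α] [DecidableEq α] (K : Finset (Rule α)) : Prop :=
  ∀ r ∈ K, r.neg = ∅ ∧ r.pos.card ≤ 1

/-- Krom-Horn programs distribute from the left over union. -/
theorem kromHorn_left_distrib {α : Type*} [Fintype α] [DecidableEq α]
    (K P R : Finset (Rule α)) (hK : isKromHorn K) :
    comp K (P ∪ R) = comp K P ∪ comp K R := by
  ext t
  simp only [comp, Finset.mem_filter, Finset.mem_univ, true_and, Finset.mem_union]
  constructor
  · rintro ⟨r, hr, S, N, hS, hN, hSc, hNc, hSh, hNh, h1, h2, h3⟩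
    obtain ⟨hneg, hpos⟩ := hK r hr
    have hN0 : N = ∅ := Finset.card_eq_zero.mp (by rw [hNc, hneg]; rfl)
    subst hN0
    rcases Finset.eq_empty_or_nonempty S with hS0 | ⟨s, hs⟩
    · subst hS0
      exact Or.inl ⟨r, hr, ∅, ∅, Finset.empty_subset _, Finset.empty_subset _,
        hSc, hNc, hSh, hNh, h1, h2, h3⟩
    · have hle : S.card ≤ 1 := hSc ▸ hpos
      have hSs : S = {s} := Finset.eq_singleton_iff_unique_mem.mpr
        ⟨hs, fun b hb => Finset.card_le_one.mp hle b hb s hs⟩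
      rcases Finset.mem_union.mp (hS hs) with hsP | hsR
      · exact Or.inl ⟨r, hr, S, ∅, hSs ▸ Finset.singleton_subset_iff.mpr hsP,
          Finset.empty_subset _, hSc, hNc, hSh, hNh, h1, h2, h3⟩
      · exact Or.inr ⟨r, hr, S, ∅, hSs ▸ Finset.singleton_subset_iff.mpr hsR,
          Finset.empty_subset _, hSc, hNc, hSh, hNh, h1, h2, h3⟩
  · rintro (⟨r, hr, S, N, hS, hN, hSc, hNc, rest⟩ | ⟨r, hr, S, N, hS, hN, hSc, hNc, rest⟩) <;>
      obtain ⟨hneg, -⟩ := hK r hr <;>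
      have hN0 : N = ∅ := Finset.card_eq_zero.mp (by rw [hNc, hneg]; rfl)
    · exact ⟨r, hr, S, N, hS.trans Finset.subset_union_left,
        hN0 ▸ Finset.empty_subset _, hSc, hNc, rest⟩
    · exact ⟨r, hr, S, N, hS.trans Finset.subset_union_right,
        hN0 ▸ Finset.empty_subset _, hSc, hNc, rest⟩
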